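/- arXiv:1304.2658 — 6 statements merged into one kernel-verified Lean document; each statement's English description precedes it below -/
import Mathlib

section
/- Let S : [0,1) → ℝ be a differentiable function satisfying the Riccati inequality S'(t) ≥ S(t)² for all t ∈ [0,1), and suppose S(t) → +∞ as t → 1⁻ (more precisely, 1/S(t) → 0 with S eventually positive). Then S(t) ≤ 1/(1-t) for all t ∈ [0,1). -/
open Set Filter

/-! Along `S' ≥ S²`, once `S` is positive it stays positive and `1/S` decreases at rate at least
one, so `t + 1/S t` is nonincreasing. Since `1/S t > 0` for every `t < 1`, this forces
`t₀ + 1/S t₀ ≥ 1`, i.e. `S t₀ ≤ 1/(1 - t₀)`. -/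

section Riccati

variable {f f' : ℝ → ℝ} {a b : ℝ}

theorem monotoneOn_Ico_of_hasDerivAt_nonneg (hf : ∀ t ∈ Ico a b, HasDerivAt f (f' t) t)
    (hf'₀ : ∀ t ∈ Ico a b, 0 ≤ f' t) : MonotoneOn f (Ico a b) := by
  refine monotoneOn_of_hasDerivWithinAt_nonneg (f' := f') (convex_Ico a b)
    (fun t ht => (hf t ht).continuousAt.continuousWithinAt) (fun t ht => ?_) (fun t ht => ?_)
  · rw [interior_Ico] at ht ⊢
    exact (hf t (Ioo_subset_Ico_self ht)).hasDerivWithinAt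
  · rw [interior_Ico] at ht
    exact hf'₀ t (Ioo_subset_Ico_self ht)

theorem antitoneOn_Ico_of_hasDerivAt_nonpos (hf : ∀ t ∈ Ico a b, HasDerivAt f (f' t) t)
    (hf'₀ : ∀ t ∈ Ico a b, f' t ≤ 0) : AntitoneOn f (Ico a b) := by
  refine antitoneOn_of_hasDerivWithinAt_nonpos (f' := f') (convex_Ico a b)
    (fun t ht => (hf t ht).continuousAt.continuousWithinAt) (fun t ht => ?_) (fun t ht => ?_)
  · rw [interior_Ico] at ht ⊢
    exact (hf t (Ioo_subset_Ico_self ht)).hasDerivWithinAt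
  · rw [interior_Ico] at ht
    exact hf'₀ t (Ioo_subset_Ico_self ht)

theorem pos_on_Ico_of_sq_le_deriv (hf : ∀ t ∈ Ico a b, HasDerivAt f (f' t) t)
    (hric : ∀ t ∈ Ico a b, f t ^ 2 ≤ f' t) (ha : 0 < f a) : ∀ t ∈ Ico a b, 0 < f t := by
  have hmono := monotoneOn_Ico_of_hasDerivAt_nonneg hf fun t ht => (sq_nonneg _).trans (hric t ht)
  intro t ht
  exact ha.trans_le (hmono (left_mem_Ico.2 (ht.1.trans_lt ht.2)) ht ht.1)

theorem antitoneOn_inv_add_id_of_sq_le_deriv (hf : ∀ t ∈ Ico a b, HasDerivAt f (f' t) t)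
    (hric : ∀ t ∈ Ico a b, f t ^ 2 ≤ f' t) (ha : 0 < f a) :
    AntitoneOn (fun t => (f t)⁻¹ + t) (Ico a b) := by
  have hpos := pos_on_Ico_of_sq_le_deriv hf hric ha
  have hderiv : ∀ t ∈ Ico a b, HasDerivAt (fun s => (f s)⁻¹ + s) (-f' t / f t ^ 2 + 1) t :=
    fun t ht => ((hf t ht).inv (hpos t ht).ne').add (hasDerivAt_id t)
  refine antitoneOn_Ico_of_hasDerivAt_nonpos hderiv fun t ht => ?_
  have : 1 ≤ f' t / f t ^ 2 := (one_le_div (pow_pos (hpos t ht) 2)).2 (hric t ht)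
  rw [neg_div]
  linarith

theorem sub_le_inv_of_sq_le_deriv (hf : ∀ t ∈ Ico a b, HasDerivAt f (f' t) t)
    (hric : ∀ t ∈ Ico a b, f t ^ 2 ≤ f' t) (ha : 0 < f a) : b - a ≤ (f a)⁻¹ := by
  have hpos := pos_on_Ico_of_sq_le_deriv hf hric ha
  have hanti := antitoneOn_inv_add_id_of_sq_le_deriv hf hric ha
  have hbelow : ∀ t ∈ Ico a b, t < (f a)⁻¹ + a := fun t ht =>
    calc t < (f t)⁻¹ + t := lt_add_of_pos_left t (inv_pos.2 (hpos t ht))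
      _ ≤ (f a)⁻¹ + a := hanti (left_mem_Ico.2 (ht.1.trans_lt ht.2)) ht ht.1
  by_contra! h
  exact lt_irrefl _
    (hbelow _ ⟨le_add_of_nonneg_left (inv_pos.2 ha).le, by linarith⟩)

end Riccati

theorem scalar_riccati_comparison_general (S : ℝ → ℝ)
    (hdiff : ∀ t ∈ Ico (0 : ℝ) 1, HasDerivAt S (deriv S t) t)
    (hric : ∀ t ∈ Ico (0 : ℝ) 1, deriv S t ≥ (S t) ^ 2) :
    ∀ t ∈ Ico (0 : ℝ) 1, S t ≤ 1 / (1 - t) := by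
  intro t ht
  have hgap : 0 < 1 - t := sub_pos.2 ht.2
  rcases le_or_gt (S t) 0 with hS | hS
  · exact hS.trans (by positivity)
  · have hsub : Ico t 1 ⊆ Ico 0 1 := Ico_subset_Ico_left ht.1
    have h := sub_le_inv_of_sq_le_deriv (fun s hs => hdiff s (hsub hs))
      (fun s hs => hric s (hsub hs)) hS
    rw [one_div]
    exact (le_inv_comm₀ hgap hS).1 h

/-- Scalar Riccati comparison: if `S' ≥ S²` on `[0,1)`, `S` is eventually positive
near `1` and `1/S → 0` as `t → 1⁻`, then `S t ≤ 1/(1-t)` on `[0,1)`. -/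
theorem scalar_riccati_comparison (S : ℝ → ℝ)
    (hdiff : ∀ t ∈ Ico (0 : ℝ) 1, HasDerivAt S (deriv S t) t)
    (hric : ∀ t ∈ Ico (0 : ℝ) 1, deriv S t ≥ (S t) ^ 2)
    (hpos : ∀ᶠ t in nhdsWithin 1 (Iio (1 : ℝ)), 0 < S t)
    (hblow : Tendsto (fun t => 1 / S t) (nhdsWithin 1 (Iio (1 : ℝ))) (nhds 0)) :
    ∀ t ∈ Ico (0 : ℝ) 1, S t ≤ 1 / (1 - t) :=
  scalar_riccati_comparison_general S hdiff hric
end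

section
/- Let n ≥ 2, k > 0, and let T : [0,1) → ℝ be differentiable with T'(t) ≥ T(t)²/(2n-2) + (2n-2)k for all t ∈ [0,1), and with T(t) → +∞ as t → 1⁻. Then T(t) ≤ √k · (2n-2) · cot(√k (1-t)) for all t ∈ [0,1) with √k(1-t) < π. -/
/-!
With `u = T / ((2n-2)√k)` the Riccati inequality becomes `u' ≥ √k (1 + u²)`, i.e. the angle
`arctan u` grows at least at rate `√k`. As `u → +∞` at `1⁻`, the angle tends to `π/2`, so
`arctan u(t) ≤ π/2 - √k (1-t)`; applying `tan` gives `u(t) ≤ cot (√k (1-t))`.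
-/

open Set Filter Real Topology

namespace Real

lemma le_tan_iff_arctan_le {x y : ℝ} (hy₁ : -(π / 2) < y) (hy₂ : y < π / 2) :
    x ≤ tan y ↔ arctan x ≤ y := by
  rw [← arctan_le_arctan_iff, arctan_tan hy₁ hy₂]

lemma tan_pi_div_two_sub_eq_cot (x : ℝ) : tan (π / 2 - x) = cot x := by
  rw [tan_pi_div_two_sub, tan_inv_eq_cot]

lemma le_cot_iff_arctan_le {x a : ℝ} (ha₀ : 0 < a) (haπ : a < π) :
    x ≤ cot a ↔ arctan x ≤ π / 2 - a := by
  rw [← tan_pi_div_two_sub_eq_cot, le_tan_iff_arctan_le] <;> linarith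

end Real

lemma MonotoneOn.le_of_tendsto_nhdsLT {α β : Type*} [LinearOrder α] [TopologicalSpace α]
    [OrderTopology α] [DenselyOrdered α] [Preorder β] [TopologicalSpace β] [ClosedIciTopology β] {f : α → β}
    {a b : α} {L : β} (hf : MonotoneOn f (Ico a b)) (hL : Tendsto f (𝓝[<] b) (𝓝 L)) {x : α}
    (hx : x ∈ Ico a b) : f x ≤ L := by
  have : (𝓝[<] b).NeBot := nhdsLT_neBot_of_exists_lt ⟨x, hx.2⟩
  refine ge_of_tendsto hL ?_
  filter_upwards [Ioo_mem_nhdsLT hx.2] with y hy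
  exact hf hx ⟨hx.1.trans hy.1.le, hy.2⟩ hy.1.le

lemma monotoneOn_arctan_sub_mul_of_riccati {D : Set ℝ} (hD : Convex ℝ D) {u u' : ℝ → ℝ}
    {b : ℝ} (hu : ∀ t ∈ D, HasDerivAt u (u' t) t)
    (hric : ∀ t ∈ D, b * (1 + u t ^ 2) ≤ u' t) :
    MonotoneOn (fun t => arctan (u t) - b * t) D := by
  have hderiv : ∀ t ∈ D,
      HasDerivAt (fun t => arctan (u t) - b * t) (1 / (1 + u t ^ 2) * u' t - b) t :=
    fun t ht => (hu t ht).arctan.sub (by simpa using (hasDerivAt_id t).const_mul b)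
  refine monotoneOn_of_hasDerivWithinAt_nonneg hD
    (fun t ht => (hderiv t ht).continuousAt.continuousWithinAt)
    (fun t ht => (hderiv t (interior_subset ht)).hasDerivWithinAt) fun t ht => ?_
  rw [sub_nonneg, one_div_mul_eq_div, le_div_iff₀ (by positivity)]
  exact hric t (interior_subset ht)

theorem le_cot_of_riccati {u u' : ℝ → ℝ} {b t₀ t₁ : ℝ} (hb : 0 < b)
    (hu : ∀ t ∈ Ico t₀ t₁, HasDerivAt u (u' t) t)
    (hric : ∀ t ∈ Ico t₀ t₁, b * (1 + u t ^ 2) ≤ u' t)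
    (hblow : Tendsto u (𝓝[<] t₁) atTop) {t : ℝ} (ht : t ∈ Ico t₀ t₁)
    (hπ : b * (t₁ - t) < π) :
    u t ≤ cot (b * (t₁ - t)) := by
  have hlim : Tendsto (fun t => arctan (u t) - b * t) (𝓝[<] t₁) (𝓝 (π / 2 - b * t₁)) :=
    ((tendsto_arctan_atTop.mono_right nhdsWithin_le_nhds).comp hblow).sub
      (((continuous_const.mul continuous_id).tendsto t₁).mono_left nhdsWithin_le_nhds)
  have hangle : arctan (u t) - b * t ≤ π / 2 - b * t₁ :=
    (monotoneOn_arctan_sub_mul_of_riccati (convex_Ico t₀ t₁) hu hric).le_of_tendsto_nhdsLT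
      hlim ht
  rw [le_cot_iff_arctan_le (mul_pos hb (sub_pos.2 ht.2)) hπ]
  linarith

theorem le_mul_cot_of_riccati {T T' : ℝ → ℝ} {a b t₀ t₁ : ℝ} (ha : 0 < a) (hb : 0 < b)
    (hT : ∀ t ∈ Ico t₀ t₁, HasDerivAt T (T' t) t)
    (hric : ∀ t ∈ Ico t₀ t₁, T t ^ 2 / a + a * b ^ 2 ≤ T' t)
    (hblow : Tendsto T (𝓝[<] t₁) atTop) {t : ℝ} (ht : t ∈ Ico t₀ t₁)
    (hπ : b * (t₁ - t) < π) :
    T t ≤ b * a * cot (b * (t₁ - t)) := by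
  have hab : 0 < a * b := mul_pos ha hb
  have hu : ∀ s ∈ Ico t₀ t₁, b * (1 + (T s / (a * b)) ^ 2) ≤ T' s / (a * b) := fun s hs => by
    rw [le_div_iff₀ hab]
    calc b * (1 + (T s / (a * b)) ^ 2) * (a * b) = T s ^ 2 / a + a * b ^ 2 := by
          field_simp; ring
      _ ≤ T' s := hric s hs
  have hcot := le_cot_of_riccati hb (fun s hs => (hT s hs).div_const (a * b)) hu
    (hblow.atTop_div_const hab) ht hπ
  rw [div_le_iff₀ hab] at hcot
  linarith

/-- Riccati comparison for the trace `T = tr S₄`: if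
`T' ≥ T²/(2n-2) + (2n-2)k` on `[0,1)` and `T → +∞` as `t → 1⁻`, then
`T t ≤ √k (2n-2) cot(√k(1-t))` whenever `√k(1-t) < π`. -/
theorem trace_riccati_comparison (n : ℕ) (hn : 2 ≤ n) (k : ℝ) (hk : 0 < k)
    (T : ℝ → ℝ)
    (hdiff : ∀ t ∈ Ico (0 : ℝ) 1, HasDerivAt T (deriv T t) t)
    (hric : ∀ t ∈ Ico (0 : ℝ) 1,
      deriv T t ≥ (T t) ^ 2 / (2 * n - 2) + (2 * n - 2) * k)
    (hblow : Tendsto T (nhdsWithin 1 (Iio (1 : ℝ))) atTop) :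
    ∀ t ∈ Ico (0 : ℝ) 1, Real.sqrt k * (1 - t) < π →
      T t ≤ Real.sqrt k * (2 * n - 2) * Real.cot (Real.sqrt k * (1 - t)) := by
  have hN : (0 : ℝ) < 2 * n - 2 := by
    have : (2 : ℝ) ≤ n := by exact_mod_cast hn
    linarith
  intro t ht hπ
  refine le_mul_cot_of_riccati hN (sqrt_pos.2 hk) hdiff (fun s hs => ?_) hblow ht hπ
  rw [sq_sqrt hk.le]
  exact hric s hs
end

section
/- Let S : [0,1) → ℝ be differentiable with S'(t) ≥ S(t)² for all t, S eventually positive near 1, and 1/S(t) → 0 as t → 1⁻. Then for all 0 ≤ t < 1, exp(-∫₀ᵗ S(τ) dτ) ≥ 1 - t. -/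
/-!
Where `S > 0`, the Riccati inequality `S' ≥ S²` makes `1/S` decrease at rate at least `1`; so if
`S t₀ > 1/(1 - t₀)`, then `1/S` would reach `0` before time `1`. Hence `S t ≤ 1/(1 - t)`, and
integrating gives `∫₀ᵗ S ≤ -log (1 - t)`.
-/

open Set Filter

section Riccati

variable {S S' : ℝ → ℝ} {a b : ℝ}

theorem monotoneOn_of_sq_le_deriv (hS : ∀ t ∈ Ico a b, HasDerivAt S (S' t) t)
    (hric : ∀ t ∈ Ico a b, S t ^ 2 ≤ S' t) : MonotoneOn S (Ico a b) := by
  refine monotoneOn_of_hasDerivWithinAt_nonneg (convex_Ico a b)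
    (fun t ht => (hS t ht).continuousAt.continuousWithinAt)
    (fun t ht => (hS t (interior_subset ht)).hasDerivWithinAt)
    (fun t ht => (sq_nonneg _).trans (hric t (interior_subset ht)))

theorem antitoneOn_inv_add_of_sq_le_deriv (hS : ∀ t ∈ Icc a b, HasDerivAt S (S' t) t)
    (hric : ∀ t ∈ Icc a b, S t ^ 2 ≤ S' t) (hpos : ∀ t ∈ Icc a b, 0 < S t) :
    AntitoneOn (fun t => (S t)⁻¹ + t) (Icc a b) := by
  have hderiv : ∀ t ∈ Icc a b, HasDerivAt (fun t => (S t)⁻¹ + t) (-S' t / S t ^ 2 + 1) t :=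
    fun t ht => ((hS t ht).inv (hpos t ht).ne').add (hasDerivAt_id t)
  refine antitoneOn_of_hasDerivWithinAt_nonpos (convex_Icc a b)
    (fun t ht => (hderiv t ht).continuousAt.continuousWithinAt)
    (fun t ht => (hderiv t (interior_subset ht)).hasDerivWithinAt) fun t ht => ?_
  have ht := interior_subset ht
  have : 1 ≤ S' t / S t ^ 2 := by
    rw [le_div_iff₀ (pow_pos (hpos t ht) 2), one_mul]; exact hric t ht
  rw [neg_div]; linarith

theorem le_inv_sub_of_sq_le_deriv (hS : ∀ t ∈ Ico a b, HasDerivAt S (S' t) t)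
    (hric : ∀ t ∈ Ico a b, S t ^ 2 ≤ S' t) {t₀ : ℝ} (ht₀ : t₀ ∈ Ico a b) :
    S t₀ ≤ (b - t₀)⁻¹ := by
  by_contra! hlt
  have hS₀ : 0 < S t₀ := (inv_pos.2 (sub_pos.2 ht₀.2)).trans hlt
  set t₁ := t₀ + (S t₀)⁻¹
  have ht₀₁ : t₀ ≤ t₁ := le_add_of_nonneg_right (inv_nonneg.2 hS₀.le)
  have ht₁ : t₁ < b := by
    have := inv_lt_of_inv_lt₀ (sub_pos.2 ht₀.2) hlt
    linarith
  have hsub : Icc t₀ t₁ ⊆ Ico a b := Icc_subset_Ico ht₀.1 ht₁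
  have hpos : ∀ t ∈ Icc t₀ t₁, 0 < S t := fun t ht =>
    hS₀.trans_le (monotoneOn_of_sq_le_deriv hS hric ht₀ (hsub ht) ht.1)
  have hanti := antitoneOn_inv_add_of_sq_le_deriv (fun t ht => hS t (hsub ht))
    (fun t ht => hric t (hsub ht)) hpos (left_mem_Icc.2 ht₀₁) (right_mem_Icc.2 ht₀₁) ht₀₁
  have := inv_pos.2 (hpos t₁ (right_mem_Icc.2 ht₀₁))
  simp only [t₁] at hanti this
  linarith

theorem integral_inv_sub {t : ℝ} (ha : a < b) (ht : t < b) :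
    ∫ τ in a..t, (b - τ)⁻¹ = Real.log ((b - a) / (b - t)) := by
  rw [intervalIntegral.integral_comp_sub_left (fun x => x⁻¹),
    integral_inv_of_pos (sub_pos.2 ht) (sub_pos.2 ha)]

theorem integral_le_log_of_sq_le_deriv (hS : ∀ t ∈ Ico a b, HasDerivAt S (S' t) t)
    (hric : ∀ t ∈ Ico a b, S t ^ 2 ≤ S' t) {t : ℝ} (ht : t ∈ Ico a b) :
    ∫ τ in a..t, S τ ≤ Real.log ((b - a) / (b - t)) := by
  have hsub : Icc a t ⊆ Ico a b := Icc_subset_Ico le_rfl ht.2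
  have hint : ∀ {f : ℝ → ℝ}, ContinuousOn f (Icc a t) →
      IntervalIntegrable f MeasureTheory.volume a t := fun hf => hf.intervalIntegrable_of_Icc ht.1
  rw [← integral_inv_sub (ht.1.trans_lt ht.2) ht.2]
  refine intervalIntegral.integral_mono_on ht.1
    (hint fun τ hτ => (hS τ (hsub hτ)).continuousAt.continuousWithinAt)
    (hint ?_) fun τ hτ => le_inv_sub_of_sq_le_deriv hS hric (hsub hτ)
  exact (continuousOn_const.sub continuousOn_id).inv₀ fun τ hτ => (sub_pos.2 (hsub hτ).2).ne'

end Riccati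

theorem exp_neg_integral_ge_general (S : ℝ → ℝ)
    (hdiff : ∀ t ∈ Ico (0 : ℝ) 1, HasDerivAt S (deriv S t) t)
    (hric : ∀ t ∈ Ico (0 : ℝ) 1, deriv S t ≥ (S t) ^ 2) :
    ∀ t ∈ Ico (0 : ℝ) 1, Real.exp (-∫ τ in (0 : ℝ)..t, S τ) ≥ 1 - t := by
  intro t ht
  have hbound := integral_le_log_of_sq_le_deriv hdiff hric ht
  rw [sub_zero, one_div, Real.log_inv] at hbound
  calc 1 - t = Real.exp (Real.log (1 - t)) := (Real.exp_log (sub_pos.2 ht.2)).symm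
    _ ≤ Real.exp (-∫ τ in (0 : ℝ)..t, S τ) := Real.exp_le_exp.2 (by linarith)

/-- Integrated scalar Riccati comparison: if `S' ≥ S²` on `[0,1)`, `S` is
eventually positive near `1` and `1/S → 0` as `t → 1⁻`, then
`exp(-∫₀ᵗ S) ≥ 1 - t` for all `t ∈ [0,1)`. -/
theorem exp_neg_integral_ge (S : ℝ → ℝ)
    (hdiff : ∀ t ∈ Ico (0 : ℝ) 1, HasDerivAt S (deriv S t) t)
    (hric : ∀ t ∈ Ico (0 : ℝ) 1, deriv S t ≥ (S t) ^ 2)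
    (hpos : ∀ᶠ t in nhdsWithin 1 (Iio (1 : ℝ)), 0 < S t)
    (hblow : Tendsto (fun t => 1 / S t) (nhdsWithin 1 (Iio (1 : ℝ))) (nhds 0)) :
    ∀ t ∈ Ico (0 : ℝ) 1, Real.exp (-∫ τ in (0 : ℝ)..t, S τ) ≥ 1 - t :=
  exp_neg_integral_ge_general S hdiff hric
end

section
/- If k₁ ≥ 0 and k₂ ≥ 0 then for all t ∈ [0,1) and all d ≥ 0 (with √(k₁)·d < 2π and √(k₂)·d < π when positive), (1-t)^{N+2} · M₁(k₁d², t) M₂(k₂d², t)^{N-3} / (M₁(k₁d², 0) M₂(k₂d², 0)^{N-3}) ≥ (1-t)^{N+2}. Consequently, a metric measure space satisfying MCP(k₁,k₂;N-1,N) with k₁,k₂ ≥ 0 satisfies MCP(0, N+2). -/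
open Set Real MeasureTheory

/-- The model function `M₁` of the generalized measure contraction property. -/
noncomputable def M1 (k t : ℝ) : ℝ :=
  if 0 < k then
    (2 - 2 * Real.cos (Real.sqrt k * (1 - t)) -
        Real.sqrt k * (1 - t) * Real.sin (Real.sqrt k * (1 - t))) /
      (Real.sqrt k * (1 - t)) ^ 4
  else if k < 0 then
    (2 - 2 * Real.cosh (Real.sqrt (-k) * (1 - t)) +
        Real.sqrt (-k) * (1 - t) * Real.sinh (Real.sqrt (-k) * (1 - t))) /
      (Real.sqrt (-k) * (1 - t)) ^ 4
  else 1 / 12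

/-- The model function `M₂` of the generalized measure contraction property. -/
noncomputable def M2 (k t : ℝ) : ℝ :=
  if 0 < k then Real.sin (Real.sqrt k * (1 - t)) / (Real.sqrt k * (1 - t))
  else if k < 0 then Real.sinh (Real.sqrt (-k) * (1 - t)) / (Real.sqrt (-k) * (1 - t))
  else 1

/-!
Since `s = √k (1 - t)` decreases in `t`, each ratio `M(k, t) / M(k, 0)` is at least `1` once the
model function is antitone in `s`. For `M₂` this is `sin s / s` on `(0, π]`, the slope of the
concave function `sin` from `0`. For `M₁` the half-angle formulas give, with `u = s / 2`,
`(2 - 2 cos s - s sin s) / s⁴ = (sin u / u) · ((sin u - u cos u) / u³) / 4`,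
a product of two nonnegative antitone functions of `u ∈ (0, π]`; the second factor has derivative
`(u² sin u - 3 sin u + 3 u cos u) / u⁴`, whose numerator vanishes at `0` and has derivative
`-u (sin u - u cos u) ≤ 0`.
-/

theorem sin_sub_mul_cos_pos {u : ℝ} (h0 : 0 < u) (h1 : u ≤ π) : 0 < sin u - u * cos u := by
  have hmono : StrictMonoOn (fun y => sin y - y * cos y) (Icc 0 π) := by
    refine strictMonoOn_of_hasDerivWithinAt_pos (convex_Icc 0 π) (by fun_prop)
      (f' := fun y => y * sin y) (fun y _ => ?_) fun y hy => ?_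
    · exact (((hasDerivAt_sin y).sub ((hasDerivAt_id' y).mul (hasDerivAt_cos y))).congr_deriv
        (by ring)).hasDerivWithinAt
    · rw [interior_Icc] at hy
      exact mul_pos hy.1 (sin_pos_of_pos_of_lt_pi hy.1 hy.2)
  simpa using hmono (left_mem_Icc.2 pi_pos.le) ⟨h0.le, h1⟩ h0

theorem strictAntiOn_sin_div_self : StrictAntiOn (fun u => sin u / u) (Ioc 0 π) := by
  intro x hx y hy hxy
  simpa using strictConcaveOn_sin_Icc.secant_strict_mono (a := 0) ⟨le_rfl, pi_pos.le⟩
    (Ioc_subset_Icc_self hx) (Ioc_subset_Icc_self hy) hx.1.ne' hy.1.ne' hxy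

theorem sq_mul_sin_sub_three_mul_sin_add_three_mul_mul_cos_nonpos {u : ℝ} (h0 : 0 ≤ u)
    (h1 : u ≤ π) :
    u ^ 2 * sin u - 3 * sin u + 3 * u * cos u ≤ 0 := by
  have hanti : AntitoneOn (fun y => y ^ 2 * sin y - 3 * sin y + 3 * y * cos y) (Icc 0 π) := by
    refine antitoneOn_of_hasDerivWithinAt_nonpos (convex_Icc 0 π) (by fun_prop)
      (f' := fun y => -(y * (sin y - y * cos y))) (fun y _ => ?_) fun y hy => ?_
    · exact (((((hasDerivAt_pow 2 y).mul (hasDerivAt_sin y)).sub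
        ((hasDerivAt_sin y).const_mul 3)).add
        (((hasDerivAt_id' y).const_mul 3).mul (hasDerivAt_cos y))).congr_deriv
        (by ring)).hasDerivWithinAt
    · rw [interior_Icc] at hy
      exact neg_nonpos.2 (mul_nonneg hy.1.le (sin_sub_mul_cos_pos hy.1 hy.2.le).le)
  simpa using hanti (left_mem_Icc.2 pi_pos.le) ⟨h0, h1⟩ h0

theorem antitoneOn_sin_sub_mul_cos_div_pow_three :
    AntitoneOn (fun u => (sin u - u * cos u) / u ^ 3) (Ioc 0 π) := by
  refine antitoneOn_of_hasDerivWithinAt_nonpos (convex_Ioc 0 π)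
    ((by fun_prop : Continuous _).continuousOn.div (by fun_prop) fun y hy => pow_ne_zero 3 hy.1.ne')
    (f' := fun y => y ^ 2 * (y ^ 2 * sin y - 3 * sin y + 3 * y * cos y) / (y ^ 3) ^ 2)
    (fun y hy => ?_) fun y hy => ?_
  all_goals rw [interior_Ioc] at hy
  · exact ((((hasDerivAt_sin y).sub ((hasDerivAt_id' y).mul (hasDerivAt_cos y))).div
      (hasDerivAt_pow 3 y) (pow_ne_zero 3 hy.1.ne')).congr_deriv
      (by simp only [Pi.sub_apply, Pi.mul_apply]; ring)).hasDerivWithinAt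
  · exact div_nonpos_of_nonpos_of_nonneg (mul_nonpos_of_nonneg_of_nonpos (sq_nonneg y)
      (sq_mul_sin_sub_three_mul_sin_add_three_mul_mul_cos_nonpos hy.1.le hy.2.le)) (sq_nonneg _)

theorem two_sub_two_mul_cos_sub_mul_sin_div_pow_four (s : ℝ) :
    (2 - 2 * cos s - s * sin s) / s ^ 4 =
      sin (s / 2) / (s / 2) * ((sin (s / 2) - s / 2 * cos (s / 2)) / (s / 2) ^ 3) / 4 := by
  obtain ⟨u, rfl⟩ : ∃ u, s = 2 * u := ⟨s / 2, by ring⟩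
  rw [mul_div_cancel_left₀ u two_ne_zero]
  rcases eq_or_ne u 0 with rfl | hu
  · simp
  rw [cos_two_mul, sin_two_mul]
  field_simp
  linear_combination (-8) * sin_sq_add_cos_sq u

theorem antitoneOn_two_sub_two_mul_cos_sub_mul_sin_div_pow_four :
    AntitoneOn (fun s => (2 - 2 * cos s - s * sin s) / s ^ 4) (Ioc 0 (2 * π)) := by
  intro x hx y hy hxy
  have hx' : x / 2 ∈ Ioc 0 π := ⟨by linarith [hx.1], by linarith [hx.2]⟩
  have hy' : y / 2 ∈ Ioc 0 π := ⟨by linarith [hy.1], by linarith [hy.2]⟩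
  simp only [two_sub_two_mul_cos_sub_mul_sin_div_pow_four]
  gcongr ?_ / 4
  exact mul_le_mul (strictAntiOn_sin_div_self.antitoneOn hx' hy' (by linarith))
    (antitoneOn_sin_sub_mul_cos_div_pow_three hx' hy' (by linarith))
    (div_nonneg (sin_sub_mul_cos_pos hy'.1 hy'.2).le (pow_nonneg hy'.1.le 3))
    (div_nonneg (sin_nonneg_of_nonneg_of_le_pi hx'.1.le hx'.2) hx'.1.le)

theorem two_sub_two_mul_cos_sub_mul_sin_div_pow_four_pos {s : ℝ} (h0 : 0 < s) (h1 : s < 2 * π) :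
    0 < (2 - 2 * cos s - s * sin s) / s ^ 4 := by
  rw [two_sub_two_mul_cos_sub_mul_sin_div_pow_four]
  have hsin := sin_pos_of_pos_of_lt_pi (half_pos h0) (by linarith)
  have hq := sin_sub_mul_cos_pos (half_pos h0) (by linarith)
  positivity

theorem M1_zero_pos {k : ℝ} (hk : 0 ≤ k) (hks : √k < 2 * π) : 0 < M1 k 0 := by
  rcases hk.eq_or_lt with rfl | hk
  · norm_num [M1]
  simpa only [M1, if_pos hk, sub_zero, mul_one] using
    two_sub_two_mul_cos_sub_mul_sin_div_pow_four_pos (sqrt_pos.2 hk) hks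

theorem M2_zero_pos {k : ℝ} (hk : 0 ≤ k) (hks : √k < π) : 0 < M2 k 0 := by
  rcases hk.eq_or_lt with rfl | hk
  · norm_num [M2]
  have hs := sqrt_pos.2 hk
  simpa only [M2, if_pos hk, sub_zero, mul_one] using div_pos (sin_pos_of_pos_of_lt_pi hs hks) hs

theorem M1_zero_le_M1 {k t : ℝ} (hk : 0 ≤ k) (hks : √k ≤ 2 * π) (ht0 : 0 ≤ t) (ht1 : t < 1) :
    M1 k 0 ≤ M1 k t := by
  rcases hk.eq_or_lt with rfl | hk
  · simp [M1]
  have hs := sqrt_pos.2 hk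
  have hst : √k * (1 - t) ≤ √k := mul_le_of_le_one_right hs.le (by linarith)
  simpa only [M1, if_pos hk, sub_zero, mul_one] using
    antitoneOn_two_sub_two_mul_cos_sub_mul_sin_div_pow_four
      ⟨mul_pos hs (by linarith), hst.trans hks⟩ ⟨hs, hks⟩ hst

theorem M2_zero_le_M2 {k t : ℝ} (hk : 0 ≤ k) (hks : √k ≤ π) (ht0 : 0 ≤ t) (ht1 : t < 1) :
    M2 k 0 ≤ M2 k t := by
  rcases hk.eq_or_lt with rfl | hk
  · simp [M2]
  have hs := sqrt_pos.2 hk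
  have hst : √k * (1 - t) ≤ √k := mul_le_of_le_one_right hs.le (by linarith)
  simpa only [M2, if_pos hk, sub_zero, mul_one] using
    strictAntiOn_sin_div_self.antitoneOn ⟨mul_pos hs (by linarith), hst.trans hks⟩ ⟨hs, hks⟩ hst

theorem one_le_M1_mul_M2_pow_div {k₁ k₂ t : ℝ} (n : ℕ) (hk₁ : 0 ≤ k₁) (hk₁s : √k₁ < 2 * π)
    (hk₂ : 0 ≤ k₂) (hk₂s : √k₂ < π) (ht0 : 0 ≤ t) (ht1 : t < 1) :
    1 ≤ M1 k₁ t * M2 k₂ t ^ n / (M1 k₁ 0 * M2 k₂ 0 ^ n) := by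
  have h₁ := M1_zero_pos hk₁ hk₁s
  have h₂ := M2_zero_pos hk₂ hk₂s
  have h₁t := M1_zero_le_M1 hk₁ hk₁s.le ht0 ht1
  rw [one_le_div (by positivity)]
  exact mul_le_mul h₁t (pow_le_pow_left₀ h₂.le (M2_zero_le_M2 hk₂ hk₂s.le ht0 ht1) n)
    (by positivity) (h₁.le.trans h₁t)

theorem MCP_nonneg_implies_MCP_zero_general (N : ℕ) (k₁ k₂ : ℝ)
    (hk₁ : 0 ≤ k₁) (hk₂ : 0 ≤ k₂) :
    (∀ t ∈ Ico (0 : ℝ) 1, ∀ d : ℝ, 0 ≤ d →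
        Real.sqrt k₁ * d < 2 * π → Real.sqrt k₂ * d < π →
        (1 - t) ^ (N + 2) * (M1 (k₁ * d ^ 2) t * (M2 (k₂ * d ^ 2) t) ^ (N - 3)) /
            (M1 (k₁ * d ^ 2) 0 * (M2 (k₂ * d ^ 2) 0) ^ (N - 3)) ≥
          (1 - t) ^ (N + 2)) ∧
    (∀ (X : Type) (_ : MeasurableSpace X) (μ : Measure X) (φ : ℝ → X → X)
        (d : X → ℝ),
      (∀ x, 0 ≤ d x) →
      (∀ x, Real.sqrt k₁ * d x < 2 * π) →
      (∀ x, Real.sqrt k₂ * d x < π) →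
      (∀ U : Set X, MeasurableSet U → ∀ t ∈ Ico (0 : ℝ) 1,
        μ (φ t '' U) ≥
          ∫⁻ x in U,
            ENNReal.ofReal
              ((1 - t) ^ (N + 2) *
                  (M1 (k₁ * (d x) ^ 2) t * (M2 (k₂ * (d x) ^ 2) t) ^ (N - 3)) /
                (M1 (k₁ * (d x) ^ 2) 0 * (M2 (k₂ * (d x) ^ 2) 0) ^ (N - 3))) ∂μ) →
      ∀ U : Set X, MeasurableSet U → ∀ t ∈ Ico (0 : ℝ) 1,
        μ (φ t '' U) ≥ ENNReal.ofReal ((1 - t) ^ (N + 2)) * μ U) := by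
  have pointwise : ∀ t ∈ Ico (0 : ℝ) 1, ∀ d : ℝ, 0 ≤ d →
      √k₁ * d < 2 * π → √k₂ * d < π →
      (1 - t) ^ (N + 2) * (M1 (k₁ * d ^ 2) t * (M2 (k₂ * d ^ 2) t) ^ (N - 3)) /
          (M1 (k₁ * d ^ 2) 0 * (M2 (k₂ * d ^ 2) 0) ^ (N - 3)) ≥ (1 - t) ^ (N + 2) := by
    intro t ⟨ht0, ht1⟩ d hd h₁ h₂
    rw [← sqrt_sq hd, ← sqrt_mul hk₁] at h₁
    rw [← sqrt_sq hd, ← sqrt_mul hk₂] at h₂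
    rw [ge_iff_le, mul_div_assoc]
    exact le_mul_of_one_le_right (pow_nonneg (by linarith) _)
      (one_le_M1_mul_M2_pow_div _ (by positivity) h₁ (by positivity) h₂ ht0 ht1)
  refine ⟨pointwise, fun X _ μ φ d hd h₁ h₂ hMCP U hU t ht => le_trans ?_ (hMCP U hU t ht)⟩
  calc ENNReal.ofReal ((1 - t) ^ (N + 2)) * μ U
      = ∫⁻ _ in U, ENNReal.ofReal ((1 - t) ^ (N + 2)) ∂μ := (setLIntegral_const U _).symm
    _ ≤ _ := lintegral_mono fun x =>
        ENNReal.ofReal_le_ofReal (pointwise t ht (d x) (hd x) (h₁ x) (h₂ x))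

/-- For `k₁, k₂ ≥ 0` the model contraction ratio dominates `(1-t)^(N+2)`;
consequently `MCP(k₁,k₂;N-1,N)` with nonnegative `k₁,k₂` implies `MCP(0,N+2)`. -/
theorem MCP_nonneg_implies_MCP_zero (N : ℕ) (hN : 3 ≤ N) (k₁ k₂ : ℝ)
    (hk₁ : 0 ≤ k₁) (hk₂ : 0 ≤ k₂) :
    (∀ t ∈ Ico (0 : ℝ) 1, ∀ d : ℝ, 0 ≤ d →
        Real.sqrt k₁ * d < 2 * π → Real.sqrt k₂ * d < π →
        (1 - t) ^ (N + 2) * (M1 (k₁ * d ^ 2) t * (M2 (k₂ * d ^ 2) t) ^ (N - 3)) /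
            (M1 (k₁ * d ^ 2) 0 * (M2 (k₂ * d ^ 2) 0) ^ (N - 3)) ≥
          (1 - t) ^ (N + 2)) ∧
    (∀ (X : Type) (_ : MeasurableSpace X) (μ : Measure X) (φ : ℝ → X → X)
        (d : X → ℝ),
      (∀ x, 0 ≤ d x) →
      (∀ x, Real.sqrt k₁ * d x < 2 * π) →
      (∀ x, Real.sqrt k₂ * d x < π) →
      (∀ U : Set X, MeasurableSet U → ∀ t ∈ Ico (0 : ℝ) 1,
        μ (φ t '' U) ≥
          ∫⁻ x in U,
            ENNReal.ofReal
              ((1 - t) ^ (N + 2) *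
                  (M1 (k₁ * (d x) ^ 2) t * (M2 (k₂ * (d x) ^ 2) t) ^ (N - 3)) /
                (M1 (k₁ * (d x) ^ 2) 0 * (M2 (k₂ * (d x) ^ 2) 0) ^ (N - 3))) ∂μ) →
      ∀ U : Set X, MeasurableSet U → ∀ t ∈ Ico (0 : ℝ) 1,
        μ (φ t '' U) ≥ ENNReal.ofReal ((1 - t) ^ (N + 2)) * μ U) :=
  MCP_nonneg_implies_MCP_zero_general N k₁ k₂ hk₁ hk₂
end

section
/- For k > 0, the 2×2 matrix function Λ(t) = [[-t/k + tan(√k t)/k^{3/2}, 1/k - sec(√k t)/k], [1/k - sec(√k t)/k, tan(√k t)/√k]] satisfies the matrix Riccati equation Λ'(t) - Λ(t) K Λ(t) + C̃₁ Λ(t) + Λ(t) C̃₁ᵀ - C̃₂ = 0 on the interval where √k t < π/2, where K = [[0,0],[0,k]], C̃₁ = [[0,1],[0,0]], C̃₂ = [[0,0],[0,1]]. Moreover Λ(t) = t C̃₂ - (t²/2)(C̃₁ + C̃₁ᵀ) + (t³/3)(C̃₁C̃₁ᵀ + C̃₂KC̃₂) + O(t⁴) as t → 0. -/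
/-!
With `s = √k` (so `k = s²`), the entries of `Λ` are `a = -t/s² + tan(st)/s³`,
`b = (1 - sec(st))/s²` and `c = tan(st)/s`, and the right-hand side of the Riccati equation is
`!![k b² - 2b, k b c - c; k b c - c, k c² + 1]`. Entrywise, the equation reduces to
`tan' = sec²`, `sec' = sec · tan` and `sec² = 1 + tan²`. The expansion at `0` follows from
`tan x = x + x³/3 + O(x⁴)` and `sec x = 1 + x²/2 + O(x⁴)`, which in turn follow from the
Taylor bounds for `sin` and `cos` after clearing the denominator `cos x`.
-/

open Set Real Matrix Asymptotics

attribute [local instance] Matrix.normedAddCommGroup Matrix.normedSpace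

open Filter Topology

theorem Filter.Tendsto.mul_isBigO {α 𝕜 : Type*} [NormedField 𝕜] {l : Filter α}
    {u f g : α → 𝕜} {c : 𝕜} (hu : Tendsto u l (𝓝 c)) (h : f =O[l] g) :
    (fun x => u x * f x) =O[l] g := by
  simpa using (hu.isBigO_one 𝕜).mul h

theorem Asymptotics.IsBigO.comp_const_mul_pow {𝕜 E : Type*} [NormedField 𝕜] [Norm E]
    {f : 𝕜 → E} {n : ℕ} (h : f =O[𝓝 0] fun x => x ^ n) (s : 𝕜) :
    (fun t => f (s * t)) =O[𝓝 0] fun t => t ^ n := by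
  refine (h.comp_tendsto ((continuous_const_mul s).tendsto' 0 0 (mul_zero s))).trans ?_
  simpa only [Function.comp_def, mul_pow] using
    (isBigO_refl (fun t : 𝕜 => t ^ n) _).const_mul_left (s ^ n)

theorem hasDerivAt_matrix_fin_two {𝕜 : Type*} [NontriviallyNormedField 𝕜]
    {f₁₁ f₁₂ f₂₁ f₂₂ : 𝕜 → 𝕜} {a₁₁ a₁₂ a₂₁ a₂₂ x : 𝕜}
    (h₁₁ : HasDerivAt f₁₁ a₁₁ x) (h₁₂ : HasDerivAt f₁₂ a₁₂ x)
    (h₂₁ : HasDerivAt f₂₁ a₂₁ x) (h₂₂ : HasDerivAt f₂₂ a₂₂ x) :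
    HasDerivAt (fun t => !![f₁₁ t, f₁₂ t; f₂₁ t, f₂₂ t]) !![a₁₁, a₁₂; a₂₁, a₂₂] x := by
  refine hasDerivAt_pi.2 fun i => hasDerivAt_pi.2 fun j => ?_
  fin_cases i <;> fin_cases j <;> simpa

namespace Real

theorem sin_sub_taylor_isBigO : (fun x => sin x - (x - x ^ 3 / 6)) =O[𝓝 0] fun x => x ^ 4 := by
  refine IsBigO.of_bound 1 ?_
  filter_upwards [Icc_mem_nhds (neg_lt_zero.2 one_pos) one_pos] with x hx
  have hx1 : |x| ≤ 1 := abs_le.2 hx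
  rw [norm_eq_abs, norm_eq_abs, one_mul, abs_pow]
  calc |sin x - (x - x ^ 3 / 6)| ≤ |x| ^ 5 / 100 := sin_bound hx1
    _ ≤ |x| ^ 4 := by nlinarith [pow_nonneg (abs_nonneg x) 4]

theorem cos_sub_taylor_isBigO : (fun x => cos x - (1 - x ^ 2 / 2)) =O[𝓝 0] fun x => x ^ 4 := by
  refine IsBigO.of_bound (5 / 96) ?_
  filter_upwards [Icc_mem_nhds (neg_lt_zero.2 one_pos) one_pos] with x hx
  rw [norm_eq_abs, norm_eq_abs, abs_pow, mul_comm]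
  exact cos_bound (abs_le.2 hx)

theorem tendsto_inv_cos_nhds_zero : Tendsto (fun x => 1 / cos x) (𝓝 0) (𝓝 1) := by
  simpa using (continuous_cos.tendsto 0).inv₀ (by simp)

theorem tan_sub_taylor_isBigO : (fun x => tan x - (x + x ^ 3 / 3)) =O[𝓝 0] fun x => x ^ 4 := by
  have hpoly : Tendsto (fun x : ℝ => x + x ^ 3 / 3) (𝓝 0) (𝓝 0) :=
    (by fun_prop : Continuous fun x : ℝ => x + x ^ 3 / 3).tendsto' 0 0 (by norm_num)
  have hx : Tendsto (fun x : ℝ => x / 6) (𝓝 0) (𝓝 0) :=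
    (by fun_prop : Continuous fun x : ℝ => x / 6).tendsto' 0 0 (by norm_num)
  have hnum : (fun x => sin x - (x + x ^ 3 / 3) * cos x) =O[𝓝 0] fun x => x ^ 4 :=
    ((sin_sub_taylor_isBigO.sub (hpoly.mul_isBigO cos_sub_taylor_isBigO)).add
      (hx.mul_isBigO (isBigO_refl _ _))).congr_left fun x => by ring
  refine (tendsto_inv_cos_nhds_zero.mul_isBigO hnum).congr' ?_ EventuallyEq.rfl
  filter_upwards [(continuous_cos.tendsto 0).eventually_ne (by simp : cos 0 ≠ 0)] with x hx
  rw [tan_eq_sin_div_cos]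
  field_simp

theorem inv_cos_sub_taylor_isBigO :
    (fun x => 1 / cos x - (1 + x ^ 2 / 2)) =O[𝓝 0] fun x => x ^ 4 := by
  have hpoly : Tendsto (fun x : ℝ => -(1 + x ^ 2 / 2)) (𝓝 0) (𝓝 (-1)) :=
    (by fun_prop : Continuous fun x : ℝ => -(1 + x ^ 2 / 2)).tendsto' 0 (-1) (by norm_num)
  have hnum : (fun x => 1 - (1 + x ^ 2 / 2) * cos x) =O[𝓝 0] fun x => x ^ 4 :=
    ((hpoly.mul_isBigO cos_sub_taylor_isBigO).add
      ((isBigO_refl _ _).const_mul_left (1 / 4))).congr_left fun x => by ring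
  refine (tendsto_inv_cos_nhds_zero.mul_isBigO hnum).congr' ?_ EventuallyEq.rfl
  filter_upwards [(continuous_cos.tendsto 0).eventually_ne (by simp : cos 0 ≠ 0)] with x hx
  field_simp

end Real

theorem riccati_rhs_fin_two {R : Type*} [CommRing R] (a b c k : R) :
    !![a, b; b, c] * !![0, 0; 0, k] * !![a, b; b, c] - !![0, 1; 0, 0] * !![a, b; b, c] -
        !![a, b; b, c] * !![0, 1; 0, 0]ᵀ + !![0, 0; 0, 1] =
      !![k * b ^ 2 - 2 * b, k * b * c - c; k * b * c - c, k * c ^ 2 + 1] := by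
  rw [show (!![0, 1; 0, 0] : Matrix (Fin 2) (Fin 2) R)ᵀ = !![0, 0; 1, 0] from eta_fin_two _]
  ext i j
  fin_cases i <;> fin_cases j <;> simp <;> ring

/-- `Λ` with `√k` renamed to `s`. -/
noncomputable def riccatiModel (s t : ℝ) : Matrix (Fin 2) (Fin 2) ℝ :=
  !![-t / s ^ 2 + tan (s * t) / s ^ 3, 1 / s ^ 2 - 1 / (s ^ 2 * cos (s * t));
     1 / s ^ 2 - 1 / (s ^ 2 * cos (s * t)), tan (s * t) / s]

theorem hasDerivAt_riccatiModel {s t : ℝ} (hs : s ≠ 0) (hc : cos (s * t) ≠ 0) :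
    HasDerivAt (riccatiModel s)
      (riccatiModel s t * !![0, 0; 0, s ^ 2] * riccatiModel s t -
        !![0, 1; 0, 0] * riccatiModel s t - riccatiModel s t * !![0, 1; 0, 0]ᵀ +
        !![0, 0; 0, 1]) t := by
  have hlin : HasDerivAt (fun x => s * x) s t := by simpa using (hasDerivAt_id t).const_mul s
  have htan : HasDerivAt (fun x => tan (s * x)) (1 / cos (s * t) ^ 2 * s) t :=
    (hasDerivAt_tan hc).comp t hlin
  have hsec : HasDerivAt (fun x => 1 / (s ^ 2 * cos (s * x)))
      ((0 * (s ^ 2 * cos (s * t)) - 1 * (s ^ 2 * (-sin (s * t) * s))) /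
        (s ^ 2 * cos (s * t)) ^ 2) t :=
    (hasDerivAt_const t 1).fun_div (hlin.cos.const_mul (s ^ 2)) (by simp [hs, hc])
  have hb : HasDerivAt (fun x => 1 / s ^ 2 - 1 / (s ^ 2 * cos (s * x)))
      (s ^ 2 * (1 / s ^ 2 - 1 / (s ^ 2 * cos (s * t))) * (tan (s * t) / s) -
        tan (s * t) / s) t := by
    refine (hsec.const_sub (1 / s ^ 2)).congr_deriv ?_
    rw [tan_eq_sin_div_cos]
    field_simp
    ring
  rw [riccatiModel, riccati_rhs_fin_two]
  refine hasDerivAt_matrix_fin_two ?_ hb hb ?_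
  · refine (((hasDerivAt_id' t).neg.div_const (s ^ 2)).add
      (htan.div_const (s ^ 3))).congr_deriv ?_
    field_simp
    ring
  · refine (htan.div_const s).congr_deriv ?_
    rw [tan_eq_sin_div_cos]
    field_simp
    linear_combination -sin_sq_add_cos_sq (s * t)

theorem riccatiModel_sub_taylor_isBigO {s : ℝ} (hs : s ≠ 0) :
    (fun t => riccatiModel s t -
        !![t ^ 3 / 3, -(t ^ 2 / 2); -(t ^ 2 / 2), t + t ^ 3 / 3 * s ^ 2])
      =O[𝓝 0] fun t => t ^ 4 := by
  have hτ := tan_sub_taylor_isBigO.comp_const_mul_pow s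
  have hσ := inv_cos_sub_taylor_isBigO.comp_const_mul_pow s
  refine isBigO_pi.2 fun i => isBigO_pi.2 fun j => ?_
  fin_cases i <;> fin_cases j
  · exact (hτ.const_mul_left (s ^ 3)⁻¹).congr_left fun t => by
      simp [riccatiModel]; field_simp; ring
  · exact (hσ.const_mul_left (-(s ^ 2)⁻¹)).congr_left fun t => by
      simp [riccatiModel]; field_simp; ring
  · exact (hσ.const_mul_left (-(s ^ 2)⁻¹)).congr_left fun t => by
      simp [riccatiModel]; field_simp; ring
  · exact (hτ.const_mul_left s⁻¹).congr_left fun t => by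
      simp [riccatiModel]; field_simp

/-- The explicit model solution `Λ` of the comparison matrix Riccati equation
`Λ' - ΛKΛ + C̃₁Λ + ΛC̃₁ᵀ - C̃₂ = 0` (for `k > 0`, on `√k|t| < π/2`), together
with its Taylor expansion
`Λ(t) = tC̃₂ - (t²/2)(C̃₁+C̃₁ᵀ) + (t³/3)(C̃₁C̃₁ᵀ + C̃₂KC̃₂) + O(t⁴)` at `t = 0`. -/
theorem model_riccati_solution (k : ℝ) (hk : 0 < k)
    (Λ : ℝ → Matrix (Fin 2) (Fin 2) ℝ)
    (hΛ : Λ = fun t =>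
      !![-t / k + Real.tan (Real.sqrt k * t) / (Real.sqrt k) ^ 3,
           1 / k - 1 / (k * Real.cos (Real.sqrt k * t));
         1 / k - 1 / (k * Real.cos (Real.sqrt k * t)),
           Real.tan (Real.sqrt k * t) / Real.sqrt k])
    (K C₁ C₂ : Matrix (Fin 2) (Fin 2) ℝ)
    (hK : K = !![0, 0; 0, k]) (hC₁ : C₁ = !![0, 1; 0, 0])
    (hC₂ : C₂ = !![0, 0; 0, 1]) :
    (∀ t : ℝ, Real.sqrt k * |t| < π / 2 →
      HasDerivAt Λ (Λ t * K * Λ t - C₁ * Λ t - Λ t * C₁ᵀ + C₂) t) ∧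
    (fun t : ℝ =>
        Λ t - (t • C₂ - (t ^ 2 / 2) • (C₁ + C₁ᵀ) +
          (t ^ 3 / 3) • (C₁ * C₁ᵀ + C₂ * K * C₂))) =O[nhds 0]
      fun t : ℝ => t ^ 4 := by
  obtain ⟨s, hs, rfl⟩ : ∃ s, 0 < s ∧ k = s ^ 2 := ⟨√k, sqrt_pos.2 hk, (sq_sqrt hk.le).symm⟩
  rw [sqrt_sq hs.le] at hΛ ⊢
  obtain rfl : Λ = riccatiModel s := hΛ
  subst hK hC₁ hC₂
  refine ⟨fun t ht => hasDerivAt_riccatiModel hs.ne' (cos_pos_of_mem_Ioo ?_).ne', ?_⟩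
  · rw [← abs_of_pos hs, ← abs_mul] at ht
    exact abs_lt.1 ht
  · convert riccatiModel_sub_taylor_isBigO hs.ne' using 3 with t
    ext i j
    fin_cases i <;> fin_cases j <;> simp [vecMul_transpose]
end

section
/- Let A, B : I → M_m(ℝ) be differentiable, satisfying A'(t) = -A(t)C₁ + B(t)R(t) and B'(t) = -A(t)C₂ + B(t)C₁ᵀ, with B(t) invertible, R(t) symmetric. Then S(t) = B(t)⁻¹A(t) satisfies the matrix Riccati equation S'(t) - S(t)C₂S(t) + C₁ᵀS(t) + S(t)C₁ - R(t) = 0. Moreover, if additionally A(t)B(t)ᵀ is symmetric for all t (Lagrangian condition), then S(t) is symmetric. -/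
/-
Differentiating `S = B⁻¹A` with `(B⁻¹)' = -B⁻¹B'B⁻¹` and substituting the structural equations,
the terms `B⁻¹(BR)` and `B⁻¹(BC₁ᵀ)B⁻¹A` collapse to `R` and `C₁ᵀS`, which is the Riccati equation.
Inversion is differentiated in a Banach algebra, so matrices are given the submultiplicative
`L∞`-operator norm; `HasDerivAt` only sees the (product) topology, which every matrix norm
induces. Symmetry of `S` follows from `S = B⁻¹ (ABᵀ) (B⁻¹)ᵀ`.
-/

open Set Matrix

section NormedAlgebra

variable {𝕜 𝔸 : Type*} [NontriviallyNormedField 𝕜] [NormedRing 𝔸] [HasSummableGeomSeries 𝔸]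
  [NormedAlgebra 𝕜 𝔸]

theorem HasDerivAt.inverse {f : 𝕜 → 𝔸} {f' : 𝔸} {t : 𝕜} (hf : HasDerivAt f f' t)
    (hu : IsUnit (f t)) :
    HasDerivAt (fun s => Ring.inverse (f s)) (-(Ring.inverse (f t) * f' * Ring.inverse (f t))) t := by
  obtain ⟨u, hu⟩ := hu
  have h := hasFDerivAt_ringInverse (𝕜 := 𝕜) u
  rw [hu] at h
  rw [← hu, Ring.inverse_unit]
  exact h.comp_hasDerivAt t hf

theorem hasDerivAt_ringInverse_mul_riccati {A B R : 𝕜 → 𝔸} {C₁ C₂ D : 𝔸} {t : 𝕜}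
    (hB : IsUnit (B t)) (hA' : HasDerivAt A (-(A t) * C₁ + B t * R t) t)
    (hB' : HasDerivAt B (-(A t) * C₂ + B t * D) t) :
    HasDerivAt (fun s => Ring.inverse (B s) * A s)
      (Ring.inverse (B t) * A t * C₂ * (Ring.inverse (B t) * A t) -
        D * (Ring.inverse (B t) * A t) - Ring.inverse (B t) * A t * C₁ + R t) t := by
  refine ((hB'.inverse hB).mul hA').congr_deriv ?_
  have hcancel : ∀ X : 𝔸, Ring.inverse (B t) * (B t * X) = X := fun X => by
    rw [← mul_assoc, Ring.inverse_mul_cancel _ hB, one_mul]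
  simp only [mul_add, add_mul, neg_mul, mul_neg, hcancel]
  noncomm_ring

end NormedAlgebra

section LinftyOp

attribute [local instance] Matrix.linftyOpNormedAddCommGroup Matrix.linftyOpNormedSpace
  Matrix.linftyOpNormedRing Matrix.linftyOpNormedAlgebra

theorem Matrix.hasDerivAt_nonsing_inv_mul_riccati {𝕜 n : Type*} [RCLike 𝕜] [Fintype n]
    [DecidableEq n] {A B R : 𝕜 → Matrix n n 𝕜} {C₁ C₂ D : Matrix n n 𝕜} {t : 𝕜}
    (hB : IsUnit (B t)) (hA' : HasDerivAt A (-(A t) * C₁ + B t * R t) t)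
    (hB' : HasDerivAt B (-(A t) * C₂ + B t * D) t) :
    HasDerivAt (fun s => (B s)⁻¹ * A s)
      ((B t)⁻¹ * A t * C₂ * ((B t)⁻¹ * A t) - D * ((B t)⁻¹ * A t) - (B t)⁻¹ * A t * C₁ + R t)
      t := by
  have h := hasDerivAt_ringInverse_mul_riccati hB hA' hB'
  simp only [← nonsing_inv_eq_ringInverse] at h
  exact h

end LinftyOp

theorem Matrix.IsSymm.nonsing_inv_mul {n α : Type*} [Fintype n] [DecidableEq n] [CommRing α]
    {A B : Matrix n n α} (h : (A * Bᵀ).IsSymm) : (B⁻¹ * A).IsSymm := by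
  by_cases hB : IsUnit B.det
  · have hS : B⁻¹ * A = B⁻¹ * (A * Bᵀ) * B⁻¹ᵀ := by
      rw [transpose_nonsing_inv, mul_assoc,
        mul_nonsing_inv_cancel_right _ _ (by rwa [det_transpose])]
    rw [hS, IsSymm, transpose_mul, transpose_mul, transpose_transpose, h.eq]
    simp only [mul_assoc]
  · simp [nonsing_inv_apply_not_isUnit _ hB, IsSymm]

attribute [local instance] Matrix.normedAddCommGroup Matrix.normedSpace

theorem riccati_from_structural_equations_general (m : ℕ) (I : Set ℝ)
    (A B R' : ℝ → Matrix (Fin m) (Fin m) ℝ)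
    (C₁ C₂ : Matrix (Fin m) (Fin m) ℝ)
    (hBinv : ∀ t ∈ I, IsUnit (B t))
    (hA' : ∀ t ∈ I, HasDerivAt A (-(A t) * C₁ + B t * R' t) t)
    (hB' : ∀ t ∈ I, HasDerivAt B (-(A t) * C₂ + B t * C₁ᵀ) t) :
    (∀ t ∈ I,
      HasDerivAt (fun t => (B t)⁻¹ * A t)
        ((B t)⁻¹ * A t * C₂ * ((B t)⁻¹ * A t) - C₁ᵀ * ((B t)⁻¹ * A t) -
          (B t)⁻¹ * A t * C₁ + R' t) t) ∧
    ((∀ t ∈ I, (A t * (B t)ᵀ)ᵀ = A t * (B t)ᵀ) →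
      ∀ t ∈ I, ((B t)⁻¹ * A t)ᵀ = (B t)⁻¹ * A t) :=
  ⟨fun t ht => hasDerivAt_nonsing_inv_mul_riccati (hBinv t ht) (hA' t ht) (hB' t ht),
    fun hsym t ht => IsSymm.nonsing_inv_mul (hsym t ht)⟩

/-- Derivation of the matrix Riccati equation from the linear structural
equations: if `A' = -AC₁ + BR`, `B' = -AC₂ + BC₁ᵀ` on an open set `I` with
`B(t)` invertible and `R(t)` symmetric, then `S = B⁻¹A` satisfies
`S' - SC₂S + C₁ᵀS + SC₁ - R = 0`; moreover if `A(t)B(t)ᵀ` is symmetric for all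
`t ∈ I`, then `S(t)` is symmetric. -/
theorem riccati_from_structural_equations (m : ℕ) (I : Set ℝ) (hI : IsOpen I)
    (A B R' : ℝ → Matrix (Fin m) (Fin m) ℝ)
    (C₁ C₂ : Matrix (Fin m) (Fin m) ℝ) (hC₂ : C₂ᵀ = C₂)
    (hR : ∀ t ∈ I, (R' t)ᵀ = R' t)
    (hBinv : ∀ t ∈ I, IsUnit (B t))
    (hA' : ∀ t ∈ I, HasDerivAt A (-(A t) * C₁ + B t * R' t) t)
    (hB' : ∀ t ∈ I, HasDerivAt B (-(A t) * C₂ + B t * C₁ᵀ) t) :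
    (∀ t ∈ I,
      HasDerivAt (fun t => (B t)⁻¹ * A t)
        ((B t)⁻¹ * A t * C₂ * ((B t)⁻¹ * A t) - C₁ᵀ * ((B t)⁻¹ * A t) -
          (B t)⁻¹ * A t * C₁ + R' t) t) ∧
    ((∀ t ∈ I, (A t * (B t)ᵀ)ᵀ = A t * (B t)ᵀ) →
      ∀ t ∈ I, ((B t)⁻¹ * A t)ᵀ = (B t)⁻¹ * A t) :=
  riccati_from_structural_equations_general m I A B R' C₁ C₂ hBinv hA' hB'
end
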